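/- arXiv:2511.20533 — 2 statements merged into one kernel-verified Lean document; each statement's English description precedes it below -/
import Mathlib

section
/- Let K be a field of characteristic different from 2 and 3, and let E: y² = x³ + A·x + B be an elliptic curve over K with nonzero discriminant Δ = -16(4A³ + 27B²). Suppose α ∈ K satisfies α³ + A·α + B = 0, so P = (α, 0) is a 2-torsion point of E. Set c = 3α² + A, A' = A - 5c, B' = B - 7c·α. Then the codomain curve E': y² = x³ + A'·x + B' also has nonzero discriminant, i.e., 4A'³ + 27B'² ≠ 0. -/
/-! If `α` is a root of `x³ + A x + B`, then with `c = 3α² + A` both discriminants factor: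
`4A³ + 27B² = c² (3α² + 4A)` and `4A'³ + 27B'² = -16 c (3α² + 4A)²`. The codomain
discriminant therefore involves only the factors of the original one, up to the unit `-16`. -/

section Velu

variable {R : Type*} [CommRing R] {A B α : R}

theorem discriminant_eq_of_isRoot (hα : α ^ 3 + A * α + B = 0) :
    4 * A ^ 3 + 27 * B ^ 2 = (3 * α ^ 2 + A) ^ 2 * (3 * α ^ 2 + 4 * A) := by
  linear_combination 27 * (B - α ^ 3 - A * α) * hα

theorem velu_discriminant_eq_of_isRoot (hα : α ^ 3 + A * α + B = 0) :
    4 * (A - 5 * (3 * α ^ 2 + A)) ^ 3 + 27 * (B - 7 * (3 * α ^ 2 + A) * α) ^ 2 =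
      -16 * (3 * α ^ 2 + A) * (3 * α ^ 2 + 4 * A) ^ 2 := by
  linear_combination 27 * (B - α ^ 3 - A * α - 14 * (3 * α ^ 2 + A) * α) * hα

end Velu

theorem velu_codomain_discriminant_ne_zero_general
    {K : Type*} [Field K] (h2 : (2 : K) ≠ 0)
    (A B α : K) (hΔ : 4 * A ^ 3 + 27 * B ^ 2 ≠ 0)
    (hα : α ^ 3 + A * α + B = 0) :
    4 * (A - 5 * (3 * α ^ 2 + A)) ^ 3 +
      27 * (B - 7 * (3 * α ^ 2 + A) * α) ^ 2 ≠ 0 := by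
  rw [discriminant_eq_of_isRoot hα] at hΔ
  obtain ⟨hc, hd⟩ := mul_ne_zero_iff.mp hΔ
  have h16 : (-16 : K) ≠ 0 := by
    simpa [show (16 : K) = 2 ^ 4 by norm_num] using pow_ne_zero 4 h2
  rw [velu_discriminant_eq_of_isRoot hα]
  exact mul_ne_zero (mul_ne_zero h16 (pow_ne_zero_iff two_ne_zero |>.mp hc)) (pow_ne_zero 2 hd)

theorem velu_codomain_discriminant_ne_zero
    {K : Type*} [Field K] (h2 : (2 : K) ≠ 0) (h3 : (3 : K) ≠ 0)
    (A B α : K) (hΔ : 4 * A ^ 3 + 27 * B ^ 2 ≠ 0)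
    (hα : α ^ 3 + A * α + B = 0) :
    4 * (A - 5 * (3 * α ^ 2 + A)) ^ 3 +
      27 * (B - 7 * (3 * α ^ 2 + A) * α) ^ 2 ≠ 0 :=
  velu_codomain_discriminant_ne_zero_general h2 A B α hΔ hα
end

section
/- Let K be a field of characteristic ≠ 2, 3 and E: y² = x³ + A·x + B an elliptic curve over K with α ∈ K a root of x³ + A·x + B. Define c = 3α² + A, A' = A - 5c, B' = B - 7cα, and for (x, y) on E with x ≠ α set φ(x,y) = (x + c/(x-α), y·(1 - c/(x-α)²)). Then φ(x,y) lies on the curve E': y² = x³ + A'·x + B'; that is, the identity (y(1 - c/(x-α)²))² = (x + c/(x-α))³ + A'(x + c/(x-α)) + B' holds whenever y² = x³ + Ax + B and α³ + Aα + B = 0. -/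
/-!
Put `t = x - α` and `c = 3α² + A`. Since `α` is a root, `x³ + Ax + B = t (t² + 3αt + c)`, and the
new abscissa is `X = α + t + c/t`. Expanding, `X³ + A'X + B' = t (t² + 3αt + c) (1 - c/t²)²`,
i.e. the codomain cubic at `X` is the domain cubic at `x` times `(dX/dx)²`; so `y · dX/dx`, which
is the new ordinate, satisfies the equation of `E'`.
-/

theorem cubic_eq_mul_of_root {R : Type*} [CommRing R] {A B α : R} (hα : α ^ 3 + A * α + B = 0)
    (x : R) : x ^ 3 + A * x + B = (x - α) * ((x - α) ^ 2 + 3 * α * (x - α) + (3 * α ^ 2 + A)) := by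
  linear_combination hα

theorem velu_codomain_cubic_eq {K : Type*} [Field K] {A B α : K} (hα : α ^ 3 + A * α + B = 0)
    {t : K} (ht : t ≠ 0) :
    (α + t + (3 * α ^ 2 + A) / t) ^ 3 + (A - 5 * (3 * α ^ 2 + A)) * (α + t + (3 * α ^ 2 + A) / t)
        + (B - 7 * (3 * α ^ 2 + A) * α) =
      t * (t ^ 2 + 3 * α * t + (3 * α ^ 2 + A)) * (1 - (3 * α ^ 2 + A) / t ^ 2) ^ 2 := by
  field_simp
  linear_combination t ^ 3 * hα

theorem velu_two_isogeny_maps_to_codomain_general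
    {K : Type*} [Field K]
    (A B α x y : K) (hα : α ^ 3 + A * α + B = 0)
    (hxy : y ^ 2 = x ^ 3 + A * x + B) (hx : x ≠ α) :
    (y * (1 - (3 * α ^ 2 + A) / (x - α) ^ 2)) ^ 2 =
      (x + (3 * α ^ 2 + A) / (x - α)) ^ 3 +
        (A - 5 * (3 * α ^ 2 + A)) * (x + (3 * α ^ 2 + A) / (x - α)) +
        (B - 7 * (3 * α ^ 2 + A) * α) := by
  have codomain_cubic := velu_codomain_cubic_eq hα (sub_ne_zero.mpr hx)
  rw [add_sub_cancel] at codomain_cubic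
  rw [mul_pow, hxy, cubic_eq_mul_of_root hα, codomain_cubic]

theorem velu_two_isogeny_maps_to_codomain
    {K : Type*} [Field K] (h2 : (2 : K) ≠ 0) (h3 : (3 : K) ≠ 0)
    (A B α x y : K) (hα : α ^ 3 + A * α + B = 0)
    (hxy : y ^ 2 = x ^ 3 + A * x + B) (hx : x ≠ α) :
    (y * (1 - (3 * α ^ 2 + A) / (x - α) ^ 2)) ^ 2 =
      (x + (3 * α ^ 2 + A) / (x - α)) ^ 3 +
        (A - 5 * (3 * α ^ 2 + A)) * (x + (3 * α ^ 2 + A) / (x - α)) +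
        (B - 7 * (3 * α ^ 2 + A) * α) :=
  velu_two_isogeny_maps_to_codomain_general A B α x y hα hxy hx
end
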